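/- arXiv:2208.04041 — 5 statements merged into one kernel-verified Lean document; each statement's English description precedes it below -/
import Mathlib

section
/- For any two total orders (permutations) σ and τ over a finite set A, the Spearman distance (the sum over a ∈ A of |pos_σ(a) - pos_τ(a)|) is at least the swap (Kendall tau) distance and at most twice the swap distance. -/
/-!
For `a : A` let `R a` count the elements that `σ` ranks after `a` and `τ` before `a`, and `L a`
the converse. Counting the elements below `a` in each order gives `σ a + R a = τ a + L a`, so
`|σ a - τ a| ≤ R a + L a`; as `R` and `L` both sum to the swap distance, the upper bound follows.
For the lower bound, a discordant pair `σ a < σ b`, `τ b < τ a` satisfies either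
`σ a ≤ τ b < τ a` or `τ b < σ a < σ b`. Charge it to `a` in the first case (injectively via `τ b`)
and to `b` in the second (via `σ a`): then `a` is charged at most
`(τ a - σ a) + (σ a - τ a) = |σ a - τ a|` times, truncated subtraction in `ℕ`.
-/
open Finset

theorem Finset.card_filter_prod_eq_sum_left {A B : Type*} [Fintype A] [Fintype B]
    (P : A × B → Prop) [DecidablePred P] : #{p | P p} = ∑ a, #{b | P (a, b)} := by
  simp only [card_filter, Fintype.sum_prod_type]

theorem Finset.card_filter_prod_eq_sum_right {A B : Type*} [Fintype A] [Fintype B]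
    (P : A × B → Prop) [DecidablePred P] : #{p | P p} = ∑ b, #{a | P (a, b)} := by
  simp only [card_filter, Fintype.sum_prod_type_right]

theorem Equiv.card_filter_apply_mem {A B : Type*} [Fintype A] [DecidableEq B] (e : A ≃ B)
    (s : Finset B) : #{a | e a ∈ s} = #s :=
  card_nbij' e e.symm (fun a ha => by simpa using ha) (fun b hb => by simpa using hb)
    (fun a _ => e.symm_apply_apply a) (fun b _ => e.apply_symm_apply b)

namespace Ranking

variable {A : Type*} [Fintype A] {n : ℕ}

theorem card_filter_rank_mem_Ico (e : A ≃ Fin n) (lo hi : Fin n) :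
    #{a | e a ∈ Ico lo hi} = hi - lo := by
  rw [e.card_filter_apply_mem, Fin.card_Ico]

theorem card_filter_rank_lt (e : A ≃ Fin n) (a : A) : #{b | e b < e a} = e a := by
  simpa only [mem_Iio, Fin.card_Iio] using e.card_filter_apply_mem (Iio (e a))

def swapSet (σ τ : A ≃ Fin n) : Finset (A × A) :=
  {p | σ p.1 < σ p.2 ∧ τ p.2 < τ p.1}

def discordantAfter (σ τ : A ≃ Fin n) (a : A) : ℕ :=
  #{b | σ a < σ b ∧ τ b < τ a}

theorem card_swapSet_eq_sum_discordantAfter (σ τ : A ≃ Fin n) :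
    #(swapSet σ τ) = ∑ a, discordantAfter σ τ a :=
  card_filter_prod_eq_sum_left _

theorem card_swapSet_eq_sum_discordantAfter_symm (σ τ : A ≃ Fin n) :
    #(swapSet σ τ) = ∑ a, discordantAfter τ σ a := by
  simp only [swapSet, discordantAfter, card_filter_prod_eq_sum_right, and_comm]

theorem rank_eq_card_add_discordantAfter (σ τ : A ≃ Fin n) (a : A) :
    (τ a : ℕ) = #{b | σ b < σ a ∧ τ b < τ a} + discordantAfter σ τ a := by
  have hafter : ∀ b, τ b < τ a → (¬σ b < σ a ↔ σ a < σ b) := fun b hb =>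
    not_lt.trans (σ.injective.ne fun h => hb.ne' (congrArg τ h)).le_iff_lt
  calc (τ a : ℕ) = #{b | τ b < τ a} := (card_filter_rank_lt τ a).symm
    _ = #{b | τ b < τ a ∧ σ b < σ a} + #{b | τ b < τ a ∧ ¬σ b < σ a} := by
      rw [← filter_filter, ← filter_filter, card_filter_add_card_filter_not]
    _ = #{b | σ b < σ a ∧ τ b < τ a} + discordantAfter σ τ a := by
      rw [discordantAfter]
      congr 1
      · simp only [and_comm]
      · exact congrArg card (filter_congr fun b _ => by
          rw [and_comm, and_congr_left_iff]; exact hafter b)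

theorem rank_add_discordantAfter (σ τ : A ≃ Fin n) (a : A) :
    (σ a : ℕ) + discordantAfter σ τ a = τ a + discordantAfter τ σ a := by
  have hτ := rank_eq_card_add_discordantAfter σ τ a
  have hσ := rank_eq_card_add_discordantAfter τ σ a
  simp only [and_comm (a := τ _ < τ a)] at hσ
  omega

theorem sum_dist_le_two_mul_card_swapSet (σ τ : A ≃ Fin n) :
    ∑ a, Nat.dist (σ a) (τ a) ≤ 2 * #(swapSet σ τ) := by
  calc ∑ a, Nat.dist (σ a) (τ a)
      ≤ ∑ a, (discordantAfter σ τ a + discordantAfter τ σ a) := by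
        gcongr with a
        have := rank_add_discordantAfter σ τ a
        unfold Nat.dist
        omega
    _ = 2 * #(swapSet σ τ) := by
        rw [sum_add_distrib, ← card_swapSet_eq_sum_discordantAfter,
          ← card_swapSet_eq_sum_discordantAfter_symm, two_mul]

theorem card_swapSet_le_sum_dist (σ τ : A ≃ Fin n) :
    #(swapSet σ τ) ≤ ∑ a, Nat.dist (σ a) (τ a) := by
  have hup : #{p ∈ swapSet σ τ | σ p.1 ≤ τ p.2} ≤ ∑ a, (τ a - σ a : ℕ) := by
    rw [swapSet, filter_filter, card_filter_prod_eq_sum_left]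
    gcongr with a
    rw [← card_filter_rank_mem_Ico τ]
    exact card_le_card (monotone_filter_right _ fun b _ ⟨⟨_, h⟩, h'⟩ => mem_Ico.2 ⟨h', h⟩)
  have hdown : #{p ∈ swapSet σ τ | ¬σ p.1 ≤ τ p.2} ≤ ∑ b, (σ b - τ b : ℕ) := by
    rw [swapSet, filter_filter, card_filter_prod_eq_sum_right]
    gcongr with b
    rw [← card_filter_rank_mem_Ico σ]
    exact card_le_card (monotone_filter_right _ fun a _ ⟨⟨h, _⟩, h'⟩ =>
      mem_Ico.2 ⟨(not_le.1 h').le, h⟩)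
  calc #(swapSet σ τ)
      = #{p ∈ swapSet σ τ | σ p.1 ≤ τ p.2} + #{p ∈ swapSet σ τ | ¬σ p.1 ≤ τ p.2} :=
        (card_filter_add_card_filter_not _).symm
    _ ≤ ∑ a, (τ a - σ a : ℕ) + ∑ a, (σ a - τ a : ℕ) := add_le_add hup hdown
    _ = ∑ a, Nat.dist (σ a) (τ a) := by
        rw [← sum_add_distrib]
        exact sum_congr rfl fun a _ => add_comm _ _

end Ranking

theorem spear_between_swap_and_twice_swap_general
    {A : Type*} [Fintype A] {n : ℕ}
    (σ τ : A ≃ Fin n)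
    (swapDist spearDist : ℕ)
    (hswap : swapDist = (Finset.univ.filter
      (fun p : A × A => σ p.1 < σ p.2 ∧ τ p.2 < τ p.1)).card)
    (hspear : spearDist = ∑ a : A, Nat.dist ((σ a : ℕ)) ((τ a : ℕ))) :
    swapDist ≤ spearDist ∧ spearDist ≤ 2 * swapDist := by
  subst hswap hspear
  exact ⟨Ranking.card_swapSet_le_sum_dist σ τ, Ranking.sum_dist_le_two_mul_card_swapSet σ τ⟩

/-- For two total orders over a finite set `A` (represented by their rank
functions `σ τ : A ≃ Fin n`), the Spearman distance
`∑ a, |pos_σ(a) - pos_τ(a)|` is at least the swap (Kendall tau) distance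
(the number of pairs on whose relative order `σ` and `τ` disagree) and at
most twice the swap distance. -/
theorem spear_between_swap_and_twice_swap
    {A : Type*} [Fintype A] [DecidableEq A] {n : ℕ}
    (σ τ : A ≃ Fin n)
    (swapDist spearDist : ℕ)
    (hswap : swapDist = (Finset.univ.filter
      (fun p : A × A => σ p.1 < σ p.2 ∧ τ p.2 < τ p.1)).card)
    (hspear : spearDist = ∑ a : A, Nat.dist ((σ a : ℕ)) ((τ a : ℕ))) :
    swapDist ≤ spearDist ∧ spearDist ≤ 2 * swapDist :=
  spear_between_swap_and_twice_swap_general σ τ swapDist spearDist hswap hspear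
end

section
/- For any two SR instances I₁ and I₂ with 2n agents each whose mutual attraction distance is nonzero, their mutual attraction distance is at least 2 and at most 4(n−1)n². -/
/-- A Stable Roommates instance on `N` agents: each agent `a` has a strict
preference order over the other `N - 1` agents, given as an injective
enumeration `pref a : Fin (N - 1) → Fin N` avoiding `a` itself. -/
structure SRInstance (N : ℕ) where
  pref : Fin N → Fin (N - 1) → Fin N
  inj : ∀ a : Fin N, Function.Injective (pref a)
  ne_self : ∀ (a : Fin N) (i : Fin (N - 1)), pref a i ≠ a

namespace SRInstance

/-- The (1-indexed) position of agent `b` in the preference order of agent `a`. -/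
def posOf {N : ℕ} (I : SRInstance N) (a b : Fin N) : ℕ :=
  ∑ j ∈ Finset.univ.filter (fun j : Fin (N - 1) => I.pref a j = b), (j.1 + 1)

/-- The mutual attraction entry of agent `a` at index `i`: the position of `a`
in the preference order of the agent ranked `i`-th by `a`. -/
def MA {N : ℕ} (I : SRInstance N) (a : Fin N) (i : Fin (N - 1)) : ℕ :=
  I.posOf (I.pref a i) a

end SRInstance

/-- The mutual attraction distance between two SR instances on `N` agents:
the minimum over bijections of the agent sets of the summed ℓ1-distances
between matched mutual attraction vectors. -/
noncomputable def distMAD {N : ℕ} (I I' : SRInstance N) : ℕ :=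
  sInf { d | ∃ σ : Fin N ≃ Fin N,
    d = ∑ a : Fin N, ∑ i : Fin (N - 1), Nat.dist (I.MA a i) (I'.MA (σ a) i) }

/-!
Every mutual attraction matrix on `N` agents is a rearrangement of the matrix all of whose rows
are `1, …, N - 1`: reading the entry `MA a i` as the position of `a` in the list of the agent
`b = pref a i` identifies the entries of `MA` with the pairs `(b, position)`.

Hence all MA matrices have the same entry sum, and since `dist x y ≡ x + y (mod 2)` every
distance is even, so a nonzero one is at least `2`.

For the upper bound compare the two matrices entrywise under the identity bijection and cut
`dist x y` into the thresholds `t` separating `x` and `y`. At threshold `t` at most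
`min (2Nt) (2N(N-1-t))` entries are separated, since each matrix has exactly `Nt` entries `≤ t`.
For `N = 2n`, summing over `t < 2n - 1` gives `2 · 2n · n(n-1)`.
-/

open Finset

namespace SRInstance

variable {N : ℕ} (I : SRInstance N)

lemma posOf_pref (a : Fin N) (i : Fin (N - 1)) : I.posOf a (I.pref a i) = i.1 + 1 := by
  have hfilter : univ.filter (fun j => I.pref a j = I.pref a i) = {i} := by
    ext j
    simp [(I.inj a).eq_iff]
  rw [posOf, hfilter, sum_singleton]

lemma image_pref (a : Fin N) : univ.image (I.pref a) = univ.erase a := by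
  refine eq_of_subset_of_card_le (fun b hb => ?_) ?_
  · obtain ⟨i, -, rfl⟩ := mem_image.mp hb
    exact mem_erase.mpr ⟨I.ne_self a i, mem_univ _⟩
  · rw [card_erase_of_mem (mem_univ a), card_image_of_injective _ (I.inj a)]
    simp

lemma sum_comp_pref {M : Type*} [AddCommMonoid M] (a : Fin N) (g : Fin N → M) :
    ∑ i, g (I.pref a i) = ∑ b ∈ univ.erase a, g b := by
  rw [← I.image_pref a, sum_image fun i _ j _ h => I.inj a h]

lemma sum_comp_MA {M : Type*} [AddCommMonoid M] (f : ℕ → M) :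
    ∑ a, ∑ i, f (I.MA a i) = N • ∑ k ∈ range (N - 1), f (k + 1) := by
  calc ∑ a, ∑ i, f (I.MA a i)
      = ∑ a, ∑ b ∈ univ.erase a, f (I.posOf b a) :=
        sum_congr rfl fun a _ => I.sum_comp_pref a fun b => f (I.posOf b a)
    _ = ∑ b, ∑ a ∈ univ.erase b, f (I.posOf b a) :=
        sum_comm' fun a b => by simp [eq_comm]
    _ = ∑ b : Fin N, ∑ i : Fin (N - 1), f (i.1 + 1) := by
        refine sum_congr rfl fun b _ => ?_
        rw [← I.sum_comp_pref b]
        simp_rw [posOf_pref]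
    _ = N • ∑ k ∈ range (N - 1), f (k + 1) := by
        rw [Fin.sum_univ_eq_sum_range (fun k => f (k + 1)), sum_const, card_univ,
          Fintype.card_fin]

lemma MA_le (a : Fin N) (i : Fin (N - 1)) : I.MA a i ≤ N - 1 := by
  have ha : a ∈ univ.image (I.pref (I.pref a i)) := by
    rw [image_pref]
    exact mem_erase.mpr ⟨(I.ne_self a i).symm, mem_univ _⟩
  obtain ⟨j, -, hj⟩ := mem_image.mp ha
  have hpos := I.posOf_pref (I.pref a i) j
  rw [hj] at hpos
  rw [MA, hpos]
  exact j.isLt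

lemma card_MA_le {t : ℕ} (ht : t ≤ N - 1) :
    #{p : Fin N × Fin (N - 1) | I.MA p.1 p.2 ≤ t} = N * t := by
  have hrange : {k ∈ range (N - 1) | k + 1 ≤ t} = range t := by
    ext k
    simp only [mem_filter, mem_range]
    omega
  rw [card_filter, Fintype.sum_prod_type' fun a i => if I.MA a i ≤ t then 1 else 0,
    I.sum_comp_MA fun v => if v ≤ t then 1 else 0, smul_eq_mul, ← card_filter, hrange, card_range]

lemma card_lt_MA (t : ℕ) :
    #{p : Fin N × Fin (N - 1) | t < I.MA p.1 p.2} = N * (N - 1 - t) := by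
  have hrange : {k ∈ range (N - 1) | t < k + 1} = Ico t (N - 1) := by
    ext k
    simp only [mem_filter, mem_range, mem_Ico]
    omega
  rw [card_filter, Fintype.sum_prod_type' fun a i => if t < I.MA a i then 1 else 0,
    I.sum_comp_MA fun v => if t < v then 1 else 0, smul_eq_mul, ← card_filter, hrange,
    Nat.card_Ico]

end SRInstance

namespace Nat

lemma dist_add_two_mul_min (x y : ℕ) : dist x y + 2 * min x y = x + y := by
  rw [dist_eq_max_sub_min]
  omega

lemma dist_eq_card_filter_range {x y K : ℕ} (hx : x ≤ K) (hy : y ≤ K) :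
    dist x y = #{t ∈ range K | min x y ≤ t ∧ t < max x y} := by
  have hfilter : {t ∈ range K | min x y ≤ t ∧ t < max x y} = Ico (min x y) (max x y) := by
    ext t
    simp only [mem_filter, mem_range, mem_Ico]
    omega
  rw [hfilter, card_Ico, dist_eq_max_sub_min]

lemma sum_dist_le_sum_range_min {ι : Type*} (s : Finset ι) (x y : ι → ℕ) {K : ℕ}
    (hx : ∀ e ∈ s, x e ≤ K) (hy : ∀ e ∈ s, y e ≤ K) :
    ∑ e ∈ s, dist (x e) (y e) ≤ ∑ t ∈ range K,
      min (#{e ∈ s | x e ≤ t} + #{e ∈ s | y e ≤ t}) (#{e ∈ s | t < x e} + #{e ∈ s | t < y e}) := by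
  classical
  calc ∑ e ∈ s, dist (x e) (y e)
      = ∑ e ∈ s, #{t ∈ range K | min (x e) (y e) ≤ t ∧ t < max (x e) (y e)} :=
        sum_congr rfl fun e he => dist_eq_card_filter_range (hx e he) (hy e he)
    _ = ∑ t ∈ range K, #{e ∈ s | min (x e) (y e) ≤ t ∧ t < max (x e) (y e)} :=
        sum_card_bipartiteAbove_eq_sum_card_bipartiteBelow _
    _ ≤ _ := by
        refine sum_le_sum fun t _ => le_min ?_ ?_ <;>
          refine (card_le_card fun e he => ?_).trans (card_union_le _ _) <;>
          simp only [mem_filter, mem_union] at he ⊢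
        · exact (min_le_iff.mp he.2.1).imp (⟨he.1, ·⟩) (⟨he.1, ·⟩)
        · exact (lt_max_iff.mp he.2.2).imp (⟨he.1, ·⟩) (⟨he.1, ·⟩)

lemma sum_range_min_sub (m : ℕ) :
    ∑ t ∈ range (2 * m + 1), min t (2 * m + 1 - t) = m * (m + 1) := by
  induction m with
  | zero => simp
  | succ m ih =>
    rw [show 2 * (m + 1) + 1 = 2 * m + 1 + 1 + 1 by ring, sum_range_succ', sum_range_succ]
    have hshift : ∀ t ∈ range (2 * m + 1),
        min (t + 1) (2 * m + 1 + 1 + 1 - (t + 1)) = min t (2 * m + 1 - t) + 1 := by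
      intro t ht
      have := mem_range.mp ht
      omega
    rw [sum_congr rfl hshift, sum_add_distrib, ih, sum_const, card_range, smul_eq_mul, mul_one]
    grind

end Nat

variable {N : ℕ}

lemma exists_eq_distMAD (I I' : SRInstance N) :
    ∃ σ : Fin N ≃ Fin N, distMAD I I' = ∑ a, ∑ i, Nat.dist (I.MA a i) (I'.MA (σ a) i) :=
  Nat.sInf_mem (s := {d | ∃ σ : Fin N ≃ Fin N, d = ∑ a, ∑ i, Nat.dist (I.MA a i) (I'.MA (σ a) i)})
    ⟨_, Equiv.refl _, rfl⟩

lemma even_distMAD (I I' : SRInstance N) : Even (distMAD I I') := by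
  obtain ⟨σ, hσ⟩ := exists_eq_distMAD I I'
  have hsum : ∑ a, ∑ i, I'.MA (σ a) i = ∑ a, ∑ i, I.MA a i :=
    (Equiv.sum_comp σ fun b => ∑ i, I'.MA b i).trans
      ((I'.sum_comp_MA id).trans (I.sum_comp_MA id).symm)
  have hpair : ∑ a, ∑ i, (Nat.dist (I.MA a i) (I'.MA (σ a) i) + 2 * min (I.MA a i) (I'.MA (σ a) i))
      = ∑ a, ∑ i, (I.MA a i + I'.MA (σ a) i) := by
    simp only [Nat.dist_add_two_mul_min]
  simp only [sum_add_distrib, ← mul_sum] at hpair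
  rw [hsum, ← hσ] at hpair
  have heven : Even (distMAD I I' + 2 * ∑ a, ∑ i, min (I.MA a i) (I'.MA (σ a) i)) := by
    rw [hpair]
    exact ⟨_, rfl⟩
  exact (Nat.even_add.mp heven).mpr (even_two_mul _)

lemma distMAD_le_sum_range_min (I I' : SRInstance N) :
    distMAD I I' ≤ 2 * N * ∑ t ∈ range (N - 1), min t (N - 1 - t) := by
  calc distMAD I I' ≤ ∑ a, ∑ i, Nat.dist (I.MA a i) (I'.MA a i) := Nat.sInf_le ⟨Equiv.refl _, rfl⟩
    _ = ∑ p : Fin N × Fin (N - 1), Nat.dist (I.MA p.1 p.2) (I'.MA p.1 p.2) :=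
        (Fintype.sum_prod_type' _).symm
    _ ≤ ∑ t ∈ range (N - 1), 2 * N * min t (N - 1 - t) := by
        refine (Nat.sum_dist_le_sum_range_min _ _ _ (fun p _ => I.MA_le p.1 p.2)
          (fun p _ => I'.MA_le p.1 p.2)).trans_eq (sum_congr rfl fun t ht => ?_)
        have ht : t ≤ N - 1 := (mem_range.mp ht).le
        rw [I.card_MA_le ht, I'.card_MA_le ht, I.card_lt_MA, I'.card_lt_MA, ← two_mul, ← two_mul,
          ← mul_assoc, ← mul_assoc, Nat.mul_min_mul_left]
    _ = 2 * N * ∑ t ∈ range (N - 1), min t (N - 1 - t) := (mul_sum ..).symm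

/-- Any two SR instances on `2n` agents with nonzero mutual attraction
distance are at distance at least `2` and at most `4(n-1)n²`. -/
theorem distMAD_bounds {n : ℕ} (I₁ I₂ : SRInstance (2 * n))
    (h : distMAD I₁ I₂ ≠ 0) :
    2 ≤ distMAD I₁ I₂ ∧ distMAD I₁ I₂ ≤ 4 * (n - 1) * n ^ 2 := by
  refine ⟨?_, (distMAD_le_sum_range_min I₁ I₂).trans_eq ?_⟩
  · obtain ⟨k, hk⟩ := even_distMAD I₁ I₂
    omega
  · rcases n with _ | m
    · simp
    · rw [show 2 * (m + 1) - 1 = 2 * m + 1 by omega, Nat.sum_range_min_sub]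
      simp only [Nat.add_sub_cancel]
      ring
end

section
/- There exist two non-isomorphic SR instances on 4 agents whose mutual attraction matrices coincide up to row permutation; hence the mutual attraction distance is not an isomorphic distance (distance zero does not imply isomorphism). -/
/-- Two SR instances on `N` agents are isomorphic if a renaming `σ` of the
agents transforms one into the other. -/
def SRIsomorphic {N : ℕ} (I I' : SRInstance N) : Prop :=
  ∃ σ : Fin N ≃ Fin N, ∀ (a : Fin N) (i : Fin (N - 1)),
    I'.pref (σ a) i = σ (I.pref a i)


/-!
Both instances rank agent `0` first for agents `1, 2, 3`, and `1` first for `0`; they differ only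
in how `1, 2, 3` rank each other, arranged so that every agent sits at the same positions in the
lists of the agents it ranks. Yet in the first instance the mutual first choices `0` and `1` have
the same last choice, which is not so for any mutual pair of the second, and such a pattern is
carried along by any renaming of the agents.
-/

theorem distMAD_eq_zero_of_MA_eq {N : ℕ} {I I' : SRInstance N} (σ : Fin N ≃ Fin N)
    (h : ∀ a, I.MA a = I'.MA (σ a)) : distMAD I I' = 0 :=
  Nat.sInf_eq_zero.mpr <| Or.inl ⟨σ, by simp [h]⟩

namespace SRInstance

def HasMutualPairAgreeingAt {N : ℕ} (I : SRInstance N) (i j : Fin (N - 1)) : Prop :=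
  ∃ a b, I.pref a i = b ∧ I.pref b i = a ∧ I.pref a j = I.pref b j

end SRInstance

theorem SRIsomorphic.hasMutualPairAgreeingAt {N : ℕ} {I I' : SRInstance N}
    (hI : SRIsomorphic I I') {i j : Fin (N - 1)} (hP : I.HasMutualPairAgreeingAt i j) :
    I'.HasMutualPairAgreeingAt i j := by
  obtain ⟨σ, hσ⟩ := hI
  obtain ⟨a, b, hab, hba, hj⟩ := hP
  exact ⟨σ a, σ b, by rw [hσ, hab], by rw [hσ, hba], by rw [hσ, hσ, hj]⟩

def maTwin₁ : SRInstance 4 where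
  pref := ![![1, 2, 3], ![0, 2, 3], ![0, 3, 1], ![0, 1, 2]]
  inj := by decide
  ne_self := by decide

def maTwin₂ : SRInstance 4 where
  pref := ![![1, 2, 3], ![0, 3, 2], ![0, 1, 3], ![0, 2, 1]]
  inj := by decide
  ne_self := by decide

theorem maTwin₁_MA_eq_maTwin₂_MA : maTwin₁.MA = maTwin₂.MA := by
  funext a i
  revert a i
  decide

theorem maTwin₁_hasMutualPairAgreeingAt : maTwin₁.HasMutualPairAgreeingAt 0 2 :=
  ⟨0, 1, rfl, rfl, rfl⟩

theorem maTwin₂_not_hasMutualPairAgreeingAt : ¬ maTwin₂.HasMutualPairAgreeingAt 0 2 := by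
  unfold SRInstance.HasMutualPairAgreeingAt
  decide

/-- There exist two non-isomorphic SR instances on 4 agents at mutual
attraction distance zero; hence the mutual attraction distance is not an
isomorphic distance. -/
theorem distMAD_not_isomorphic :
    ∃ I I' : SRInstance 4, distMAD I I' = 0 ∧ ¬ SRIsomorphic I I' :=
  ⟨maTwin₁, maTwin₂,
    distMAD_eq_zero_of_MA_eq (Equiv.refl _) (congrFun maTwin₁_MA_eq_maTwin₂_MA),
    fun hiso => maTwin₂_not_hasMutualPairAgreeingAt
      (hiso.hasMutualPairAgreeingAt maTwin₁_hasMutualPairAgreeingAt)⟩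
end

section
/- For every n, the mutual disagreement matrix MD^{2n} (all rows equal to (2n−1, 2n−2, …, 1)) is realized by the cyclic SR instance on agents a₁,…,a_{2n} where agent a_i's preferences are a_{i+1} ≻ a_{i+2} ≻ … ≻ a_{2n} ≻ a₁ ≻ … ≻ a_{i−1} (indices mod 2n). -/
/-- `I` is the cyclic SR instance on agents `a₀, …, a_{2n-1}` where agent
`aᵢ`'s preferences are `a_{i+1} ≻ a_{i+2} ≻ … ` (indices mod `2n`). -/
def IsCyclicInstance {n : ℕ} (I : SRInstance (2 * n)) : Prop :=
  ∀ (a : Fin (2 * n)) (i : Fin (2 * n - 1)),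
    (I.pref a i).1 = (a.1 + i.1 + 1) % (2 * n)

/-!
In the cyclic instance agent `a` ranks `a + i + 1` in place `i` (indices mod `N`), so the
agent `b = a + i + 1` ranked `i`-th by `a` reaches `a` again after `N - (i + 1)` further steps:
`a` sits in place `N - (i + 1)` of `b`'s list, independently of `a`.
-/

theorem Nat.eq_of_add_mod_eq_add_mod {N a x y : ℕ} (hx : x < N) (hy : y < N)
    (h : (a + x) % N = (a + y) % N) : x = y :=
  (Nat.ModEq.add_left_cancel' a h).eq_of_lt_of_lt hx hy

namespace SRInstance

theorem posOf_eq_of_pref_eq {N : ℕ} (I : SRInstance N) {a b : Fin N} {j : Fin (N - 1)}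
    (h : I.pref a j = b) : I.posOf a b = j.1 + 1 := by
  have hfilter : Finset.univ.filter (fun k => I.pref a k = b) = {j} := by
    ext k
    simp only [Finset.mem_filter, Finset.mem_univ, true_and, Finset.mem_singleton]
    exact ⟨fun hk => I.inj a (hk.trans h.symm), fun hk => hk ▸ h⟩
  rw [posOf, hfilter, Finset.sum_singleton]

def cyclic (N : ℕ) : SRInstance N where
  pref a i := ⟨(a.1 + i.1 + 1) % N, Nat.mod_lt _ a.pos⟩
  inj a i j h := by
    have := Nat.eq_of_add_mod_eq_add_mod (a := a.1) (x := i.1 + 1) (y := j.1 + 1)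
      (by omega) (by omega) (congrArg Fin.val h)
    exact Fin.ext (by omega)
  ne_self a i h := by
    have h' : (a.1 + (i.1 + 1)) % N = (a.1 + 0) % N :=
      (congrArg Fin.val h).trans (Nat.mod_eq_of_lt a.2).symm
    have := Nat.eq_of_add_mod_eq_add_mod (by omega) a.pos h'
    omega

theorem MA_eq_of_pref_eq_cyclic {N : ℕ} (I : SRInstance N)
    (hI : ∀ a i, (I.pref a i).1 = (a.1 + i.1 + 1) % N) (a : Fin N) (i : Fin (N - 1)) :
    I.MA a i = N - (i.1 + 1) := by
  have hi := i.2
  let j : Fin (N - 1) := ⟨N - 1 - (i.1 + 1), by omega⟩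
  have hj_val : j.1 = N - 1 - (i.1 + 1) := rfl
  have hj : I.pref (I.pref a i) j = a := by
    apply Fin.ext
    rw [hI, hI, add_assoc, Nat.mod_add_mod,
      show a.1 + i.1 + 1 + (j.1 + 1) = a.1 + N by omega,
      Nat.add_mod_right, Nat.mod_eq_of_lt a.2]
  rw [MA, I.posOf_eq_of_pref_eq hj]
  omega

end SRInstance

theorem cyclic_realizes_MD_general (n : ℕ) :
    (∃ I : SRInstance (2 * n), IsCyclicInstance I) ∧
    ∀ I : SRInstance (2 * n), IsCyclicInstance I →
      ∀ a i, I.MA a i = 2 * n - (i.1 + 1) :=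
  ⟨⟨SRInstance.cyclic (2 * n), fun _ _ => rfl⟩, fun I hI => I.MA_eq_of_pref_eq_cyclic hI⟩

/-- For every `n ≥ 1`, the cyclic SR instance exists and realizes the mutual
disagreement matrix `MD^{2n}` (all rows equal to `(2n-1, 2n-2, …, 1)`). -/
theorem cyclic_realizes_MD (n : ℕ) (hn : 1 ≤ n) :
    (∃ I : SRInstance (2 * n), IsCyclicInstance I) ∧
    ∀ I : SRInstance (2 * n), IsCyclicInstance I →
      ∀ a i, I.MA a i = 2 * n - (i.1 + 1) :=
  cyclic_realizes_MD_general n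
end

section
/- In the bipartite Stable Marriage setting with n men and n women, the mutual agreement matrix pair (both matrices having all rows equal to (1,2,…,n)) is realizable: by Hall's theorem the complete bipartite graph K_{n,n} can be partitioned into n perfect matchings M₁,…,M_n, and defining each agent to rank at position i its partner in M_i yields an SM instance where any two agents rank each other at the same position. -/
/-- A Stable Marriage instance with `n` men and `n` women: each man has a
strict preference order over the women (`mpref u i` is the woman ranked `i`-th
by man `u`) and each woman has a strict preference order over the men. -/
structure SMInstance (n : ℕ) where
  mpref : Fin n → Fin n → Fin n
  wpref : Fin n → Fin n → Fin n
  minj : ∀ u, Function.Injective (mpref u)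
  winj : ∀ w, Function.Injective (wpref w)

/-- The (1-indexed) position of woman `w` in man `u`'s preferences. -/
def SMInstance.mposOf {n : ℕ} (I : SMInstance n) (u w : Fin n) : ℕ :=
  ∑ j ∈ Finset.univ.filter (fun j : Fin n => I.mpref u j = w), (j.1 + 1)

/-- The (1-indexed) position of man `u` in woman `w`'s preferences. -/
def SMInstance.wposOf {n : ℕ} (I : SMInstance n) (w u : Fin n) : ℕ :=
  ∑ j ∈ Finset.univ.filter (fun j : Fin n => I.wpref w j = u), (j.1 + 1)

/-!
Instead of Hall's theorem, an explicit decomposition of `K_{n,n}` into perfect matchings suffices: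
the cyclic shifts `Mᵢ = {(u, u + i)}`, with arithmetic in `Fin n` taken mod `n`.
Man `u` ranks woman `u + i` at position `i`, and woman `w` ranks man `w - i` at position `i`,
so every couple ranks each other at the same position.
-/

open Finset

theorem Finset.sum_filter_apply_eq_of_injective {ι α M : Type*} [Fintype ι] [DecidableEq α]
    [AddCommMonoid M] {f : ι → α} (hf : Function.Injective f) (g : ι → M) (i : ι) :
    ∑ j ∈ univ.filter (fun j => f j = f i), g j = g i := by
  refine sum_eq_single_of_mem i (by simp) fun j hj hji => ?_
  exact absurd (hf (mem_filter.1 hj).2) hji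

namespace SMInstance

variable {n : ℕ} (I : SMInstance n)

theorem mposOf_mpref (u i : Fin n) : I.mposOf u (I.mpref u i) = i.1 + 1 :=
  sum_filter_apply_eq_of_injective (I.minj u) _ i

theorem wposOf_wpref (w i : Fin n) : I.wposOf w (I.wpref w i) = i.1 + 1 :=
  sum_filter_apply_eq_of_injective (I.winj w) _ i

theorem wposOf_mpref_of_wpref_mpref {u i : Fin n} (h : I.wpref (I.mpref u i) i = u) :
    I.wposOf (I.mpref u i) u = i.1 + 1 := by
  simpa only [h] using I.wposOf_wpref (I.mpref u i) i

theorem mposOf_wpref_of_mpref_wpref {w i : Fin n} (h : I.mpref (I.wpref w i) i = w) :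
    I.mposOf (I.wpref w i) w = i.1 + 1 := by
  simpa only [h] using I.mposOf_mpref (I.wpref w i) i

end SMInstance

def cyclicSMInstance (n : ℕ) [NeZero n] : SMInstance n where
  mpref u i := u + i
  wpref w i := w - i
  minj u := add_right_injective u
  winj _ := sub_right_injective

/-- In the Stable Marriage setting, the mutual agreement matrix pair (both
matrices having all rows equal to `(1, 2, …, n)`) is realizable: there is an
SM instance in which any two agents rank each other at the same position
(obtained by partitioning `K_{n,n}` into `n` perfect matchings via Hall's
theorem). -/
theorem SM_mutual_agreement_realizable (n : ℕ) :
    ∃ I : SMInstance n,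
      (∀ u i : Fin n, I.wposOf (I.mpref u i) u = i.1 + 1) ∧
      (∀ w i : Fin n, I.mposOf (I.wpref w i) w = i.1 + 1) := by
  cases n with
  | zero =>
    exact ⟨⟨Fin.elim0, Fin.elim0, fun u => u.elim0, fun w => w.elim0⟩,
      fun u => u.elim0, fun w => w.elim0⟩
  | succ m =>
    exact ⟨cyclicSMInstance (m + 1),
      fun u i => SMInstance.wposOf_mpref_of_wpref_mpref _ (add_sub_cancel_right u i),
      fun w i => SMInstance.mposOf_wpref_of_mpref_wpref _ (sub_add_cancel w i)⟩
end
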